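/- arXiv:1010.0051 — 12 statements merged into one kernel-verified Lean document; each statement's English description precedes it below -/
import Mathlib

section
/- Let R be a von Neumann regular ring with identity and let a, b ∈ R. Then the following are equivalent: (1) a ≤⊕ b (direct sum partial order); (2) a ≤⁻ b (minus partial order); (3) every von Neumann inverse of b is a von Neumann inverse of a, i.e. for all x ∈ R, b*x*b = b implies a*x*a = a. -/
open Pointwise

/-- The right ideal `aR = {a*r : r ∈ R}`. -/
def rId {R : Type*} [Ring R] (a : R) : Set R := Set.range (fun r => a * r)

/-- The direct sum partial order: `a ≤⊕ b` iff `bR = aR ⊕ (b-a)R`. -/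
def dsLE {R : Type*} [Ring R] (a b : R) : Prop :=
  rId a + rId (b - a) = rId b ∧ rId a ∩ rId (b - a) = {0}

/-- The minus partial order. -/
def minusLE {R : Type*} [Ring R] (a b : R) : Prop :=
  ∃ x : R, a * x * a = a ∧ a * x = b * x ∧ x * a = x * b

theorem stmt2 {R : Type*} [Ring R]
    (hreg : ∀ r : R, ∃ x : R, r * x * r = r) (a b : R) :
    List.TFAE [
      dsLE a b,
      minusLE a b,
      ∀ x : R, b * x * b = b → a * x * a = a] := by
  tfae_have 1 → 3 := by
    rintro ⟨hsum, hint⟩ x hx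
    -- a ∈ rId b
    have ha : a ∈ rId b := by
      rw [← hsum]
      have h1 : a ∈ rId a := ⟨1, mul_one a⟩
      have h2 : (0 : R) ∈ rId (b - a) := ⟨0, mul_zero _⟩
      simpa using Set.add_mem_add h1 h2
    obtain ⟨q, hq⟩ := ha
    simp only at hq
    -- b * x * a = a
    have hbxa : b * x * a = a := by
      rw [← hq, show b * x * (b * q) = b * x * b * q by noncomm_ring, hx]
    -- a*x*a - a is in the intersection
    have hmem : a * x * a - a ∈ rId a ∩ rId (b - a) := by
      constructor
      · exact ⟨x * a - 1, by noncomm_ring⟩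
      · refine ⟨-(x * a), ?_⟩
        show (b - a) * -(x * a) = a * x * a - a
        have : (b - a) * -(x * a) = a * x * a - b * x * a := by noncomm_ring
        rw [this, hbxa]
    rw [hint, Set.mem_singleton_iff, sub_eq_zero] at hmem
    exact hmem
  tfae_have 3 → 2 := by
    intro h
    obtain ⟨x, hx⟩ := hreg b
    have h1 : a * x * a = a := h x hx
    -- family 1 : (a - a*x*b) * r * a = 0 for all r
    have hA : ∀ r : R, (a - a * x * b) * r * a = 0 := by
      intro r
      have hz : b * (x + (1 - x * b) * r) * b = b := by
        have : b * (x + (1 - x * b) * r) * b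
            = b * x * b + (b - b * x * b) * (r * b) := by noncomm_ring
        rw [this, hx]; simp
      have hza := h _ hz
      have expand : a * (x + (1 - x * b) * r) * a
          = a * x * a + (a - a * x * b) * r * a := by noncomm_ring
      rw [expand, h1] at hza
      exact add_eq_left.mp hza
    -- family 2 : a * r * (a - b*x*a) = 0 for all r
    have hB : ∀ r : R, a * r * (a - b * x * a) = 0 := by
      intro r
      have hz : b * (x + r * (1 - b * x)) * b = b := by
        have : b * (x + r * (1 - b * x)) * b
            = b * x * b + (b * r) * (b - b * x * b) := by noncomm_ring
        rw [this, hx]; simp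
      have hza := h _ hz
      have expand : a * (x + r * (1 - b * x)) * a
          = a * x * a + a * r * (a - b * x * a) := by noncomm_ring
      rw [expand, h1] at hza
      exact add_eq_left.mp hza
    -- a * x * b = a
    have haxb : a * x * b = a := by
      obtain ⟨v, hv⟩ := hreg (a - a * x * b)
      have key : (a - a * x * b) * v * (a - a * x * b)
          = ((a - a * x * b) * v * a) * (1 - x * b) := by noncomm_ring
      rw [hv, hA v, zero_mul] at key
      exact (sub_eq_zero.mp key).symm
    -- b * x * a = a
    have hbxa : b * x * a = a := by
      obtain ⟨v, hv⟩ := hreg (a - b * x * a)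
      have key : (a - b * x * a) * v * (a - b * x * a)
          = (1 - b * x) * (a * v * (a - b * x * a)) := by noncomm_ring
      rw [hv, hB v, mul_zero] at key
      exact (sub_eq_zero.mp key).symm
    -- the witness x * a * x
    refine ⟨x * a * x, ?_, ?_, ?_⟩
    · rw [show a * (x * a * x) * a = a * x * a * x * a by noncomm_ring, h1, h1]
    · have e1 : a * (x * a * x) = (a * x * a) * x := by noncomm_ring
      have e2 : b * (x * a * x) = (b * x * a) * x := by noncomm_ring
      rw [e1, e2, h1, hbxa]
    · have e1 : (x * a * x) * a = x * (a * x * a) := by noncomm_ring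
      have e2 : (x * a * x) * b = x * (a * x * b) := by noncomm_ring
      rw [e1, e2, h1, haxb]
  tfae_have 2 → 1 := by
    rintro ⟨x, h1, h2, h3⟩
    have haxb : a * x * b = a := by
      have : a * x * b = a * (x * b) := by rw [mul_assoc]
      rw [this, ← h3, ← mul_assoc, h1]
    have hbxa : b * x * a = a := by rw [← h2, h1]
    have hbxb : b * x * b = a := by rw [← h2, haxb]
    constructor
    · ext y
      simp only [rId, Set.mem_add, Set.mem_range]
      constructor
      · rintro ⟨_, ⟨r, rfl⟩, _, ⟨s, rfl⟩, rfl⟩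
        refine ⟨x * b * r + (1 - x * b) * s, ?_⟩
        show b * (x * b * r + (1 - x * b) * s) = _
        have : b * (x * b * r + (1 - x * b) * s)
            = b * x * b * r + (b - b * x * b) * s := by noncomm_ring
        rw [this, hbxb]
      · rintro ⟨t, rfl⟩
        exact ⟨a * t, ⟨t, rfl⟩, (b - a) * t, ⟨t, rfl⟩, by noncomm_ring⟩
    · ext y
      simp only [Set.mem_inter_iff, rId, Set.mem_range, Set.mem_singleton_iff]
      constructor
      · rintro ⟨⟨r, hr⟩, ⟨s, hs⟩⟩
        have hy : y = a * x * y := by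
          rw [← hr, show a * x * (a * r) = a * x * a * r by noncomm_ring, h1]
        rw [hy, ← hs]
        have : a * x * ((b - a) * s) = (a * x * b - a * x * a) * s := by noncomm_ring
        rw [this, haxb, h1, sub_self, zero_mul]
      · rintro rfl
        exact ⟨⟨0, mul_zero _⟩, ⟨0, mul_zero _⟩⟩
  tfae_finish
end

section
/- Let R be a von Neumann regular ring with identity and let a, b ∈ R with b = b*b (b idempotent). Then a ≤⁻ b if and only if a = a*a, a = a*b and a = b*a. -/
theorem stmt3 {R : Type*} [Ring R]
    (hreg : ∀ r : R, ∃ x : R, r * x * r = r) (a b : R) (hb : b = b * b) :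
    minusLE a b ↔ (a = a * a ∧ a = a * b ∧ a = b * a) := by
  constructor
  · rintro ⟨x, h1, h2, h3⟩
    have hba : b * a = a := by
      calc b * a = b * (a * x * a) := by rw [h1]
        _ = b * (b * x * a) := by rw [h2]
        _ = (b * b) * x * a := by noncomm_ring
        _ = b * x * a := by rw [← hb]
        _ = a * x * a := by rw [h2]
        _ = a := h1
    have hab : a * b = a := by
      calc a * b = (a * x * a) * b := by rw [h1]
        _ = a * (x * a) * b := by noncomm_ring
        _ = a * (x * b) * b := by rw [h3]
        _ = a * x * (b * b) := by noncomm_ring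
        _ = a * x * b := by rw [← hb]
        _ = a * (x * b) := by noncomm_ring
        _ = a * (x * a) := by rw [h3]
        _ = a := by rw [← mul_assoc]; exact h1
    have hbxa : b * x * a = a := by rw [← h2]; exact h1
    have haa : a * a = a := by
      calc a * a = a * (b * x * a) := by rw [hbxa]
        _ = (a * b) * (x * a) := by noncomm_ring
        _ = a * (x * a) := by rw [hab]
        _ = a * x * a := by noncomm_ring
        _ = a := h1
    exact ⟨haa.symm, hab.symm, hba.symm⟩
  · rintro ⟨h1, h2, h3⟩
    exact ⟨a, by rw [← h1, ← h1], by rw [← h1, ← h3], by rw [← h1, ← h2]⟩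
end

section
/- Let R be a von Neumann regular ring with identity and let a, b, c ∈ R with b = a + c. Then a ≤⁻ b if and only if aR ∩ cR = {0} and Ra ∩ Rc = {0}. -/
/-- The left ideal `Ra = {r*a : r ∈ R}`. -/
def lId {R : Type*} [Ring R] (a : R) : Set R := Set.range (fun r => r * a)

private lemma aux {R : Type*} [Ring R] {p q r s : R} (h : p + q = r + s) :
    r - p = q - s := by
  rw [sub_eq_sub_iff_add_eq_add]
  exact h.symm.trans (add_comm p q)

theorem stmt4 {R : Type*} [Ring R]
    (hreg : ∀ r : R, ∃ x : R, r * x * r = r) (a b c : R) (hb : b = a + c) :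
    minusLE a b ↔ (rId a ∩ rId c = {0} ∧ lId a ∩ lId c = {0}) := by
  constructor
  · rintro ⟨x, hx1, hx2, hx3⟩
    have hcx : c * x = 0 := by
      rw [hb, add_mul] at hx2
      exact (left_eq_add.mp hx2)
    have hxc : x * c = 0 := by
      rw [hb, mul_add] at hx3
      exact (left_eq_add.mp hx3)
    constructor
    · apply Set.eq_singleton_iff_unique_mem.mpr
      constructor
      · exact ⟨⟨0, mul_zero a⟩, ⟨0, mul_zero c⟩⟩
      · rintro z ⟨⟨r, hr⟩, ⟨s, hs⟩⟩
        simp only at hr hs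
        have h2 : a * x * (c * s) = 0 := by
          rw [← mul_assoc, mul_assoc a x c, hxc, mul_zero, zero_mul]
        calc z = a * r := hr.symm
          _ = a * x * a * r := by rw [hx1]
          _ = a * x * (a * r) := by rw [mul_assoc]
          _ = a * x * (c * s) := by rw [hr, ← hs]
          _ = 0 := h2
    · apply Set.eq_singleton_iff_unique_mem.mpr
      constructor
      · exact ⟨⟨0, zero_mul a⟩, ⟨0, zero_mul c⟩⟩
      · rintro z ⟨⟨r, hr⟩, ⟨s, hs⟩⟩
        simp only at hr hs
        have h2 : s * c * (x * a) = 0 := by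
          rw [mul_assoc, ← mul_assoc c x a, hcx, zero_mul, mul_zero]
        calc z = r * a := hr.symm
          _ = r * (a * x * a) := by rw [hx1]
          _ = r * a * (x * a) := by noncomm_ring
          _ = s * c * (x * a) := by rw [hr, ← hs]
          _ = 0 := h2
  · rintro ⟨hrI, hlI⟩
    obtain ⟨g, hg⟩ := hreg b
    have memR : ∀ z : R, z ∈ rId a ∩ rId c → z = 0 := by
      intro z hz
      rw [hrI] at hz
      exact hz
    have memL : ∀ z : R, z ∈ lId a ∩ lId c → z = 0 := by
      intro z hz
      rw [hlI] at hz
      exact hz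
    -- Step 1: a*(g*b) = a and c*(g*b) = c
    have hsum : a * (g * b) + c * (g * b) = a + c := by
      rw [← add_mul, ← hb, ← mul_assoc, hg, hb]
    have hv : a * (g * b) - a = 0 := by
      apply memR
      constructor
      · exact ⟨g * b - 1, by noncomm_ring⟩
      · refine ⟨1 - g * b, ?_⟩
        show c * (1 - g * b) = a * (g * b) - a
        have h := aux hsum.symm
        rw [mul_sub, mul_one, h]
    have hv0 : a * (g * b) = a := sub_eq_zero.mp hv
    -- Step 2: b*g*a = a
    have hsum2 : b * g * a + b * g * c = a + c := by
      rw [← mul_add, ← hb, hg, hb]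
    have hw : b * g * a - a = 0 := by
      apply memL
      constructor
      · exact ⟨b * g - 1, by noncomm_ring⟩
      · refine ⟨1 - b * g, ?_⟩
        show (1 - b * g) * c = b * g * a - a
        have h := aux hsum2.symm
        rw [sub_mul, one_mul, h]
    have hbga : b * g * a = a := sub_eq_zero.mp hw
    -- Step 3: a*g*a = a, a*(g*c) = 0, c*(g*a) = 0
    have hA : a * g * a + c * g * a = a := by
      rw [hb, add_mul, add_mul] at hbga
      exact hbga
    have hB : a * g * a + a * g * c = a := by
      rw [← mul_assoc, hb, mul_add] at hv0
      exact hv0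
    have h1 : c * g * a = a - a * g * a := by
      rw [eq_sub_iff_add_eq, add_comm]; exact hA
    have h2 : a * g * c = a - a * g * a := by
      rw [eq_sub_iff_add_eq, add_comm]; exact hB
    have hEq : c * (g * a) = a * (g * c) := by
      rw [← mul_assoc, ← mul_assoc, h1, h2]
    have hd : a * (g * c) = 0 := by
      apply memR
      exact ⟨⟨g * c, rfl⟩, ⟨g * a, hEq⟩⟩
    have hd' : c * (g * a) = 0 := hEq.trans hd
    have haga : a * g * a = a := by
      rw [mul_assoc a g c, hd, add_zero] at hB
      exact hB
    -- the witness
    refine ⟨g * a * g, ?_, ?_, ?_⟩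
    · have e1 : a * (g * a * g) * a = a * g * a * (g * a) := by noncomm_ring
      rw [e1, haga, ← mul_assoc, haga]
    · rw [hb, add_mul]
      have e2 : c * (g * a * g) = 0 := by
        have : c * (g * a * g) = c * (g * a) * g := by noncomm_ring
        rw [this, hd', zero_mul]
      rw [e2, add_zero]
    · rw [hb, mul_add]
      have e3 : g * a * g * c = 0 := by
        have : g * a * g * c = g * (a * (g * c)) := by noncomm_ring
        rw [this, hd, mul_zero]
      rw [e3, add_zero]
end

section
/- Let R be a von Neumann regular ring with identity and let a, c ∈ R be nonzero elements with aR ∩ cR = {0} and Ra ∩ Rc = {0}. Then there exists a nonzero x ∈ R with a*x*a = a, x*c = 0 and c*x = 0 (i.e. a nonzero von Neumann inverse of a annihilating c on both sides). -/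
theorem stmt5 {R : Type*} [Ring R]
    (hreg : ∀ r : R, ∃ x : R, r * x * r = r) (a c : R)
    (ha : a ≠ 0) (hc : c ≠ 0)
    (h1 : rId a ∩ rId c = {0}) (h2 : lId a ∩ lId c = {0}) :
    ∃ x : R, x ≠ 0 ∧ a * x * a = a ∧ x * c = 0 ∧ c * x = 0 := by
  obtain ⟨z, hz⟩ := hreg a
  -- Step 1: find w with c*w*c = c and w*a = 0, using h1.
  obtain ⟨v, hv⟩ := hreg ((1 - a*z) * c)
  have hkey1 : c * (1 - v * ((1 - a*z) * c)) = 0 := by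
    have hd0 : ((1 - a*z) * c) * (1 - v * ((1 - a*z) * c)) = 0 := by
      rw [mul_sub, mul_one, ← mul_assoc, hv, sub_self]
    have hmem : c * (1 - v * ((1 - a*z) * c)) ∈ rId a ∩ rId c := by
      constructor
      · refine ⟨z * (c * (1 - v * ((1 - a*z) * c))), ?_⟩
        show a * (z * (c * (1 - v * ((1 - a*z) * c)))) = c * (1 - v * ((1 - a*z) * c))
        have expand : c * (1 - v * ((1 - a*z) * c))
            - a * (z * (c * (1 - v * ((1 - a*z) * c))))
            = ((1 - a*z) * c) * (1 - v * ((1 - a*z) * c)) := by noncomm_ring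
        exact (sub_eq_zero.mp (expand.trans hd0)).symm
      · exact ⟨1 - v * ((1 - a*z) * c), rfl⟩
    have : c * (1 - v * ((1 - a*z) * c)) ∈ ({0} : Set R) := h1 ▸ hmem
    simpa using this
  set w : R := v * (1 - a*z) with hwdef
  have hw1 : c * w * c = c := by
    have : c * (v * ((1 - a*z) * c)) = c := by
      have := hkey1
      rw [mul_sub, mul_one, sub_eq_zero] at this
      exact this.symm
    calc c * w * c = c * (v * ((1 - a*z) * c)) := by rw [hwdef]; noncomm_ring
    _ = c := this
  have hw2 : w * a = 0 := by
    have : w * a = v * (a - a * z * a) := by rw [hwdef]; noncomm_ring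
    rw [this, hz, sub_self, mul_zero]
  -- Step 2: find w₂ with c*w₂*c = c and a*w₂ = 0, using h2.
  obtain ⟨v₂, hv₂⟩ := hreg (c * (1 - z*a))
  have hkey2 : (1 - (c * (1 - z*a)) * v₂) * c = 0 := by
    have hd0 : (1 - (c * (1 - z*a)) * v₂) * (c * (1 - z*a)) = 0 := by
      rw [sub_mul, one_mul, mul_assoc, ← mul_assoc (c * (1 - z*a)) v₂, hv₂, sub_self]
    have hmem : (1 - (c * (1 - z*a)) * v₂) * c ∈ lId a ∩ lId c := by
      constructor
      · refine ⟨(1 - (c * (1 - z*a)) * v₂) * c * z, ?_⟩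
        show (1 - (c * (1 - z*a)) * v₂) * c * z * a = (1 - (c * (1 - z*a)) * v₂) * c
        have expand : (1 - (c * (1 - z*a)) * v₂) * c
            - (1 - (c * (1 - z*a)) * v₂) * c * z * a
            = (1 - (c * (1 - z*a)) * v₂) * (c * (1 - z*a)) := by noncomm_ring
        exact (sub_eq_zero.mp (expand.trans hd0)).symm
      · exact ⟨1 - (c * (1 - z*a)) * v₂, rfl⟩
    have : (1 - (c * (1 - z*a)) * v₂) * c ∈ ({0} : Set R) := h2 ▸ hmem
    simpa using this
  set w₂ : R := (1 - z*a) * v₂ with hw₂def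
  have hw₂1 : c * w₂ * c = c := by
    have : (c * (1 - z*a)) * v₂ * c = c := by
      have := hkey2
      rw [sub_mul, one_mul, sub_eq_zero] at this
      exact this.symm
    calc c * w₂ * c = (c * (1 - z*a)) * v₂ * c := by rw [hw₂def]; noncomm_ring
    _ = c := this
  have hw₂2 : a * w₂ = 0 := by
    have : a * w₂ = (a - a * z * a) * v₂ := by rw [hw₂def]; noncomm_ring
    rw [this, hz, sub_self, zero_mul]
  -- Step 3: combine; w' := w₂ * c * w kills a on both sides and cw'c = c.
  set w' : R := w₂ * c * w with hw'def
  have hcw'c : c * w' * c = c := by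
    have h : c * w' * c = (c * w₂ * c) * w * c := by rw [hw'def]; noncomm_ring
    rw [h, hw₂1, hw1]
  have hw'a : w' * a = 0 := by
    have h : w' * a = w₂ * c * (w * a) := by rw [hw'def]; noncomm_ring
    rw [h, hw2, mul_zero]
  have haw' : a * w' = 0 := by
    have h : a * w' = (a * w₂) * (c * w) := by rw [hw'def]; noncomm_ring
    rw [h, hw₂2, zero_mul]
  have haxa : a * ((1 - w'*c) * z * (1 - c*w')) * a = a := by
    have h : a * ((1 - w'*c) * z * (1 - c*w')) * a
        = a*z*a - a*z*(c*(w'*a)) - (a*w')*(c*(z*a)) + (a*w')*(c*(z*(c*(w'*a)))) := by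
      noncomm_ring
    rw [h, hw'a, haw', hz]
    simp
  have hxc : ((1 - w'*c) * z * (1 - c*w')) * c = 0 := by
    have h : ((1 - w'*c) * z * (1 - c*w')) * c
        = (1 - w'*c) * (z * (c - c*w'*c)) := by noncomm_ring
    rw [h, hcw'c, sub_self, mul_zero, mul_zero]
  have hcx : c * ((1 - w'*c) * z * (1 - c*w')) = 0 := by
    have h : c * ((1 - w'*c) * z * (1 - c*w'))
        = (c - c*w'*c) * (z * (1 - c*w')) := by noncomm_ring
    rw [h, hcw'c, sub_self, zero_mul]
  exact ⟨(1 - w'*c) * z * (1 - c*w'),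
    fun h0 => ha (by rw [← haxa, h0, mul_zero, zero_mul]),
    haxa, hxc, hcx⟩
end

section
/- In the ring R of 4 × 4 matrices over the complex numbers, let a = E₁₃ (the matrix unit with 1 in position (1,3) and 0 elsewhere), b = E₂₄, and c = E₁₃ + E₁₄ + E₂₄. Then a ≤⁻ c, b ≤⁻ c, aR ∩ bR = {0}, Ra ∩ Rb = {0}, and yet a + b ≤⁻ c fails. (This answers a question of Hartwig in the negative.) -/
/-- `E₁₃` in `M₄(ℂ)` (rows and columns indexed `1,…,4`). -/
noncomputable def E13 : Matrix (Fin 4) (Fin 4) ℂ := Matrix.single 0 2 1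

/-- `E₂₄` in `M₄(ℂ)`. -/
noncomputable def E24 : Matrix (Fin 4) (Fin 4) ℂ := Matrix.single 1 3 1

/-- `E₁₄` in `M₄(ℂ)`. -/
noncomputable def E14 : Matrix (Fin 4) (Fin 4) ℂ := Matrix.single 0 3 1

/-!
Writing `b = a + d`, the relation `a ≤⁻ b` says exactly that some inner inverse `x` of `a`
(i.e. `a x a = a`) satisfies `d x = 0` and `x d = 0`. Explicit inner inverses of `E₁₃` and `E₂₄`
annihilate `E₁₄ + E₂₄` and `E₁₃ + E₁₄` respectively. The ideals meet trivially because `E₁₃` and `E₂₄`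
live in different rows and in different columns. For `a + b = E₁₃ + E₂₄` and `d = E₁₄`, however,
`E₁₄ x = 0` kills the fourth row of `x`, while entry `(2,4)` of `(a + b) x (a + b) = a + b` reads
`x₄₂ = 1` (`x 3 1` with `Fin 4` indices).
-/

open Matrix

theorem minusLE_iff_exists_sub {R : Type*} [Ring R] (a b : R) :
    minusLE a b ↔ ∃ x : R, a * x * a = a ∧ (b - a) * x = 0 ∧ x * (b - a) = 0 := by
  simp only [minusLE, sub_mul, mul_sub, sub_eq_zero]
  exact exists_congr fun x => and_congr_right' (and_congr eq_comm eq_comm)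

section SingleIdeals

variable {n α : Type*} [Fintype n] [DecidableEq n] [Ring α]

theorem rId_single_inter_rId_single {i k : n} (hik : i ≠ k) (j l : n) (c d : α) :
    rId (single i j c) ∩ rId (single k l d) = {0} := by
  refine Set.eq_singleton_iff_unique_mem.2 ⟨⟨⟨0, mul_zero _⟩, ⟨0, mul_zero _⟩⟩, ?_⟩
  rintro m ⟨⟨r, rfl⟩, ⟨s, hs⟩⟩
  beta_reduce at hs ⊢
  ext p q
  by_cases hp : p = i
  · subst hp
    rw [← hs, single_mul_apply_of_ne _ _ _ _ _ hik, Matrix.zero_apply]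
  · rw [single_mul_apply_of_ne _ _ _ _ _ hp, Matrix.zero_apply]

theorem lId_single_inter_lId_single {j l : n} (hjl : j ≠ l) (i k : n) (c d : α) :
    lId (single i j c) ∩ lId (single k l d) = {0} := by
  refine Set.eq_singleton_iff_unique_mem.2 ⟨⟨⟨0, zero_mul _⟩, ⟨0, zero_mul _⟩⟩, ?_⟩
  rintro m ⟨⟨r, rfl⟩, ⟨s, hs⟩⟩
  beta_reduce at hs ⊢
  ext p q
  by_cases hq : q = j
  · subst hq
    rw [← hs, mul_single_apply_of_ne _ _ _ _ _ hjl, Matrix.zero_apply]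
  · rw [mul_single_apply_of_ne _ _ _ _ _ hq, Matrix.zero_apply]

end SingleIdeals

theorem minusLE_E13 : minusLE E13 (E13 + E14 + E24) := by
  rw [minusLE_iff_exists_sub]
  refine ⟨single 2 0 1 - single 2 1 1, ?_, ?_, ?_⟩ <;>
    simp [E13, E14, E24, mul_sub, sub_mul, add_mul, mul_add]

theorem minusLE_E24 : minusLE E24 (E13 + E14 + E24) := by
  rw [minusLE_iff_exists_sub]
  refine ⟨single 3 1 1 - single 2 1 1, ?_, ?_, ?_⟩ <;>
    simp [E13, E14, E24, mul_sub, sub_mul, add_mul, mul_add]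

theorem not_minusLE_E13_add_E24 : ¬ minusLE (E13 + E24) (E13 + E14 + E24) := by
  rw [minusLE_iff_exists_sub, add_right_comm, add_sub_cancel_left]
  rintro ⟨x, hx, hE14x, -⟩
  have hx₃₁_zero : x 3 1 = 0 := by
    simpa [E14] using congr_fun (congr_fun hE14x 0) 1
  have hx₃₁_one : x 3 1 = 1 := by
    simpa [E13, E24, add_mul, mul_add, single_apply] using congr_fun (congr_fun hx 1) 3
  exact one_ne_zero (hx₃₁_one.symm.trans hx₃₁_zero)

theorem stmt6 :
    minusLE E13 (E13 + E14 + E24) ∧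
    minusLE E24 (E13 + E14 + E24) ∧
    rId E13 ∩ rId E24 = {0} ∧
    lId E13 ∩ lId E24 = {0} ∧
    ¬ minusLE (E13 + E24) (E13 + E14 + E24) :=
  ⟨minusLE_E13, minusLE_E24, rId_single_inter_rId_single (by decide) _ _ _ _,
    lId_single_inter_lId_single (by decide) _ _ _ _, not_minusLE_E13_add_E24⟩
end

section
/- Let R be a von Neumann regular ring with identity and let a, b ∈ R have a common von Neumann inverse (there exists g ∈ R with a*g*a = a and b*g*b = b). Then the following are equivalent: (1) aR ⊆ bR and Ra ⊆ Rb; (2) a ≤⊕ b. -/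
open Pointwise

theorem stmt7 {R : Type*} [Ring R]
    (hreg : ∀ r : R, ∃ x : R, r * x * r = r) (a b : R)
    (hcom : ∃ g : R, a * g * a = a ∧ b * g * b = b) :
    (rId a ⊆ rId b ∧ lId a ⊆ lId b) ↔ dsLE a b := by
  obtain ⟨g, hga, hgb⟩ := hcom
  constructor
  · rintro ⟨hr, hl⟩
    obtain ⟨s, hs⟩ : a ∈ rId b := hr ⟨1, mul_one a⟩
    obtain ⟨t, ht⟩ : a ∈ lId b := hl ⟨1, one_mul a⟩
    simp only at hs ht
    -- hs : b * s = a, ht : t * b = a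
    have hagb : a * g * b = a := by
      calc a * g * b = t * (b * g * b) := by rw [← ht]; noncomm_ring
        _ = t * b := by rw [hgb]
        _ = a := ht
    constructor
    · ext x
      constructor
      · rintro hx
        obtain ⟨y, ⟨r, rfl⟩, z, ⟨u, rfl⟩, rfl⟩ := Set.mem_add.mp hx
        refine ⟨s * r + (1 - s) * u, ?_⟩
        simp only
        calc b * (s * r + (1 - s) * u) = (b * s) * r + (b - b * s) * u := by noncomm_ring
          _ = a * r + (b - a) * u := by rw [hs]
      · rintro ⟨r, rfl⟩
        exact Set.mem_add.mpr ⟨a * r, ⟨r, rfl⟩, (b - a) * r, ⟨r, rfl⟩, by noncomm_ring⟩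
    · ext x
      simp only [Set.mem_inter_iff, Set.mem_singleton_iff]
      constructor
      · rintro ⟨⟨r, hr1⟩, ⟨u, hu1⟩⟩
        simp only at hr1 hu1
        calc x = a * r := hr1.symm
          _ = (a * g * a) * r := by rw [hga]
          _ = a * g * (a * r) := by noncomm_ring
          _ = a * g * ((b - a) * u) := by rw [hr1, ← hu1]
          _ = (a * g * b - a * g * a) * u := by noncomm_ring
          _ = 0 := by rw [hagb, hga]; noncomm_ring
      · rintro rfl
        exact ⟨⟨0, mul_zero a⟩, ⟨0, mul_zero _⟩⟩
  · rintro ⟨hsum, hint⟩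
    -- a ∈ bR
    have hbma : b - a ∈ rId b := by
      rw [← hsum]
      exact Set.mem_add.mpr ⟨a * 0, ⟨0, rfl⟩, (b - a) * 1, ⟨1, rfl⟩, by noncomm_ring⟩
    obtain ⟨u, hu⟩ := hbma
    simp only at hu
    have ha_bR : b * (1 - u) = a := by rw [mul_sub, mul_one, hu]; noncomm_ring
    -- a = a * g * b, via unique decomposition
    have key : a * (1 - g * b) = 0 := by
      have hmem : a * (1 - g * b) ∈ rId a ∩ rId (b - a) := by
        refine ⟨⟨1 - g * b, rfl⟩, ⟨g * b - 1, ?_⟩⟩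
        simp only
        calc (b - a) * (g * b - 1) = (b * g * b) - a * (g * b) - b + a := by noncomm_ring
          _ = b - a * (g * b) - b + a := by rw [hgb]
          _ = a * (1 - g * b) := by noncomm_ring
      rw [hint] at hmem
      exact hmem
    have hagb : (a * g) * b = a := by
      have : a - a * (g * b) = 0 := by rw [← key]; noncomm_ring
      have h2 : a * (g * b) = a := (sub_eq_zero.mp this).symm
      calc (a * g) * b = a * (g * b) := by noncomm_ring
        _ = a := h2
    constructor
    · rintro x ⟨r, rfl⟩
      exact ⟨(1 - u) * r, by simp only; rw [← mul_assoc, ha_bR]⟩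
    · rintro x ⟨r, rfl⟩
      exact ⟨r * (a * g), by simp only; rw [mul_assoc, hagb]⟩
end

section
/- Let R be a von Neumann regular ring with identity and let a, b ∈ R. Then the following are equivalent: (1) b is a weak von Neumann inverse of a (b*a*b = b); (2) there exists a strong von Neumann inverse c of a (a*c*a = a and c*a*c = c) such that b ≤⊕ c. -/
open Pointwise

lemma mem_rId {R : Type*} [Ring R] {a z : R} : z ∈ rId a ↔ ∃ r, a * r = z := Iff.rfl

theorem stmt8 {R : Type*} [Ring R]
    (hreg : ∀ r : R, ∃ x : R, r * x * r = r) (a b : R) :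
    b * a * b = b ↔
      ∃ c : R, a * c * a = a ∧ c * a * c = c ∧ dsLE b c := by
  constructor
  · intro hb
    obtain ⟨x, hx⟩ := hreg a
    set u : R := (1 - b*a) * x * (1 - a*b) with hu
    have hab : a*b*(a*b) = a*b := by
      calc a*b*(a*b) = a*(b*a*b) := by noncomm_ring
        _ = a*b := by rw [hb]
    have hba : b*a*(b*a) = b*a := by
      calc b*a*(b*a) = (b*a*b)*a := by noncomm_ring
        _ = b*a := by rw [hb]
    have huab : u*(a*b) = 0 := by
      have h0 : (1-a*b)*(a*b) = 0 := by
        calc (1-a*b)*(a*b) = a*b - a*b*(a*b) := by noncomm_ring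
          _ = 0 := by rw [hab, sub_self]
      calc u*(a*b) = (1-b*a)*x*((1-a*b)*(a*b)) := by rw [hu]; noncomm_ring
        _ = 0 := by rw [h0, mul_zero]
    have hbau : b*a*u = 0 := by
      have h0 : (b*a)*(1-b*a) = 0 := by
        calc (b*a)*(1-b*a) = b*a - b*a*(b*a) := by noncomm_ring
          _ = 0 := by rw [hba, sub_self]
      calc b*a*u = ((b*a)*(1-b*a))*(x*(1-a*b)) := by rw [hu]; noncomm_ring
        _ = 0 := by rw [h0, zero_mul]
    have hdxa : (a - a*b*a)*x*a = a - a*b*a := by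
      calc (a - a*b*a)*x*a = a*x*a - a*b*(a*x*a) := by noncomm_ring
        _ = a - a*b*a := by rw [hx]
    have hdba : (a - a*b*a)*(b*a) = 0 := by
      calc (a - a*b*a)*(b*a) = a*b*a - a*(b*a*b)*a := by noncomm_ring
        _ = 0 := by rw [hb]; noncomm_ring
    have haua : a*u*a = a - a*b*a := by
      calc a*u*a = (a - a*b*a)*x*a - ((a - a*b*a)*x*a)*(b*a) := by rw [hu]; noncomm_ring
        _ = (a - a*b*a) - (a - a*b*a)*(b*a) := by rw [hdxa]
        _ = a - a*b*a := by rw [hdba]; noncomm_ring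
    have hc0 : a*(b+u)*a = a := by
      calc a*(b+u)*a = a*b*a + a*u*a := by noncomm_ring
        _ = a := by rw [haua]; noncomm_ring
    set c : R := (b+u)*a*(b+u) with hcdef
    have haca : a*c*a = a := by
      have h1 : a*c*a = (a*(b+u)*a)*(b+u)*a := by rw [hcdef]; noncomm_ring
      rw [h1, hc0]; exact hc0
    have hca : c*a = (b+u)*a := by
      calc c*a = (b+u)*(a*(b+u)*a) := by rw [hcdef]; noncomm_ring
        _ = (b+u)*a := by rw [hc0]
    have hcac : c*a*c = c := by
      calc c*a*c = ((b+u)*a)*((b+u)*a*(b+u)) := by rw [hca, hcdef]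
        _ = ((b+u)*(a*(b+u)*a))*(b+u) := by noncomm_ring
        _ = c := by rw [hc0, hcdef]
    have hcb : c - b = u*a*u := by
      calc c - b = (b*a*b - b) + b*a*u + u*(a*b) + u*a*u := by rw [hcdef]; noncomm_ring
        _ = u*a*u := by rw [hb, hbau, huab]; noncomm_ring
    have hbav : b*a*(c - b) = 0 := by
      rw [hcb]
      calc b*a*(u*a*u) = (b*a*u)*(a*u) := by noncomm_ring
        _ = 0 := by rw [hbau, zero_mul]
    have hvab : (c - b)*(a*b) = 0 := by
      rw [hcb]
      calc (u*a*u)*(a*b) = (u*a)*(u*(a*b)) := by noncomm_ring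
        _ = 0 := by rw [huab, mul_zero]
    have hcab : c*(a*b) = b := by
      have h1 : c*(a*b) = (c - b)*(a*b) + b*a*b := by noncomm_ring
      rw [h1, hvab, hb, zero_add]
    refine ⟨c, haca, hcac, ?_, ?_⟩
    · ext z
      constructor
      · rintro ⟨w1, ⟨r, rfl⟩, w2, ⟨s, rfl⟩, rfl⟩
        refine ⟨a*b*r + (1 - a*b)*s, ?_⟩
        calc c*(a*b*r + (1 - a*b)*s) = (c*(a*b))*r + (c - c*(a*b))*s := by noncomm_ring
          _ = b*r + (c - b)*s := by rw [hcab]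
      · rintro ⟨r, rfl⟩
        exact ⟨b*r, ⟨r, rfl⟩, (c-b)*r, ⟨r, rfl⟩, by noncomm_ring⟩
    · ext z
      simp only [Set.mem_inter_iff, Set.mem_singleton_iff, mem_rId]
      constructor
      · rintro ⟨⟨r, hr⟩, ⟨s, hs⟩⟩
        have h1 : z = b*a*z := by
          rw [← hr]
          calc b*r = (b*a*b)*r := by rw [hb]
            _ = b*a*(b*r) := by noncomm_ring
        rw [h1, ← hs]
        calc b*a*((c-b)*s) = (b*a*(c-b))*s := by noncomm_ring
          _ = 0 := by rw [hbav, zero_mul]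
      · rintro rfl
        exact ⟨⟨0, mul_zero _⟩, ⟨0, mul_zero _⟩⟩
  · rintro ⟨c, haca, hcac, hsum, hint⟩
    have hbmem : b ∈ rId c := by
      rw [← hsum]
      have : b + 0 ∈ rId b + rId (c - b) :=
        Set.add_mem_add ⟨1, mul_one b⟩ ⟨0, mul_zero _⟩
      simpa using this
    obtain ⟨t, ht⟩ := hbmem
    have hcab : c*(a*b) = b := by
      rw [← ht]
      calc c*(a*(c*t)) = (c*a*c)*t := by noncomm_ring
        _ = c*t := by rw [hcac]
    have key : b - b*a*b ∈ rId b ∩ rId (c - b) := by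
      constructor
      · exact ⟨1 - a*b, by noncomm_ring⟩
      · refine ⟨a*b, ?_⟩
        calc (c - b)*(a*b) = c*(a*b) - b*a*b := by noncomm_ring
          _ = b - b*a*b := by rw [hcab]
    rw [hint] at key
    have := Set.mem_singleton_iff.mp key
    exact (sub_eq_zero.mp this).symm
end

section
/- Let R be a von Neumann regular ring with identity, let e, f ∈ R be idempotents, and let α = f*x*e ∈ fRe for some x ∈ R. Suppose y is a weak von Neumann inverse of α (y*α*y = y), z is a strong von Neumann inverse of α (α*z*α = α and z*α*z = z), and y ≤⊕ z. Then e*y*f ≤⊕ e*z*f. -/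
open Pointwise

theorem stmt9 {R : Type*} [Ring R]
    (hreg : ∀ r : R, ∃ x : R, r * x * r = r)
    (e f : R) (he : e * e = e) (hf : f * f = f)
    (α x : R) (hα : α = f * x * e)
    (y z : R)
    (hy : y * α * y = y)
    (hz1 : α * z * α = α) (hz2 : z * α * z = z)
    (hyz : dsLE y z) :
    dsLE (e * y * f) (e * z * f) := by
  obtain ⟨hsum, hint⟩ := hyz
  have mem_rId : ∀ a w : R, w ∈ rId a ↔ ∃ r, a * r = w := fun a w => Iff.rfl
  -- closure properties
  have hsubm : ∀ (a : R) {w₁ w₂ : R}, w₁ ∈ rId a → w₂ ∈ rId a → w₁ - w₂ ∈ rId a := by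
    intro a w₁ w₂ h1 h2
    obtain ⟨r₁, hr₁⟩ := (mem_rId a w₁).mp h1
    obtain ⟨r₂, hr₂⟩ := (mem_rId a w₂).mp h2
    exact (mem_rId a _).mpr ⟨r₁ - r₂, by rw [mul_sub, hr₁, hr₂]⟩
  have haddm : ∀ (a : R) {w₁ w₂ : R}, w₁ ∈ rId a → w₂ ∈ rId a → w₁ + w₂ ∈ rId a := by
    intro a w₁ w₂ h1 h2
    obtain ⟨r₁, hr₁⟩ := (mem_rId a w₁).mp h1
    obtain ⟨r₂, hr₂⟩ := (mem_rId a w₂).mp h2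
    exact (mem_rId a _).mpr ⟨r₁ + r₂, by rw [mul_add, hr₁, hr₂]⟩
  have h0 : ∀ a : R, (0 : R) ∈ rId a := fun a => (mem_rId a 0).mpr ⟨0, mul_zero a⟩
  -- basic algebra
  have hαe : α * e = α := by rw [hα, mul_assoc, he]
  have hzαe : z * α * e = z * α := by rw [mul_assoc, hαe]
  have hyy : y ∈ rId y := (mem_rId y y).mpr ⟨α * y, by rw [← mul_assoc, hy]⟩
  have hzz : z ∈ rId z := (mem_rId z z).mpr ⟨α * z, by rw [← mul_assoc, hz2]⟩
  have hysub : rId y ⊆ rId z := by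
    intro w hw
    have := Set.add_mem_add hw (h0 (z - y))
    rw [add_zero, hsum] at this
    exact this
  have hwsub : rId (z - y) ⊆ rId z := by
    intro w hw
    have := Set.add_mem_add (h0 y) hw
    rw [zero_add, hsum] at this
    exact this
  have hzyz : z - y ∈ rId z := hsubm z hzz (hysub hyy)
  -- z*α fixes rId z
  have hres : ∀ w : R, w ∈ rId z → z * α * w = w := by
    intro w hw
    obtain ⟨r, hr⟩ := (mem_rId z w).mp hw
    rw [← hr, ← mul_assoc, hz2]
  have hze : ∀ m : R, z * α * (e * m) = z * α * m := by
    intro m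
    rw [← mul_assoc, hzαe]
  -- intersection gives zero
  have hzero : ∀ w : R, w ∈ rId y → w ∈ rId (z - y) → w = 0 := by
    intro w h1 h2
    have : w ∈ rId y ∩ rId (z - y) := ⟨h1, h2⟩
    rw [hint] at this
    exact this
  -- z - y ∈ rId (z - y)
  have hww : z - y ∈ rId (z - y) := by
    have h1 : z - y ∈ rId y + rId (z - y) := by rw [hsum]; exact hzyz
    obtain ⟨u, hu, v, hv, huv⟩ := Set.mem_add.mp h1
    have h2 : u = (z - y) - v := by rw [← huv, add_sub_cancel_right]
    obtain ⟨t, ht⟩ := (mem_rId (z - y) v).mp hv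
    have h3 : u ∈ rId (z - y) := by
      refine (mem_rId _ _).mpr ⟨1 - t, ?_⟩
      rw [mul_sub, mul_one, ht, ← h2]
    have h4 : u = 0 := hzero u hu h3
    rw [h4, zero_add] at huv
    exact huv ▸ hv
  -- the key identity: (z-y)*α*(z-y) = z - y
  have hwαw : (z - y) * α * (z - y) = z - y := by
    have h1 : z * α * (z - y) = z - y := hres _ hzyz
    have h2 : (z - y) - (z - y) * α * (z - y) = y * (α * (z - y)) := by
      have h3 : z * α * (z - y) - (z - y) * α * (z - y) = y * (α * (z - y)) := by
        noncomm_ring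
      rw [h1] at h3
      exact h3
    have h4 : (z - y) - (z - y) * α * (z - y) ∈ rId (z - y) :=
      hsubm _ hww ((mem_rId _ _).mpr ⟨α * (z - y), by rw [← mul_assoc]⟩)
    have h5 : y * (α * (z - y)) ∈ rId y := (mem_rId _ _).mpr ⟨α * (z - y), rfl⟩
    have h6 : y * (α * (z - y)) = 0 := hzero _ h5 (h2 ▸ h4)
    have h7 : (z - y) - (z - y) * α * (z - y) = 0 := h2.trans h6
    exact (sub_eq_zero.mp h7).symm
  -- key lemma: if a*α*a = a then e*(a*r) ∈ rId (e*a*f)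
  have key : ∀ a : R, a * α * a = a → ∀ r : R, e * (a * r) ∈ rId (e * a * f) := by
    intro a ha r
    refine (mem_rId _ _).mpr ⟨x * (e * (a * r)), ?_⟩
    have h1 : e * a * f * (x * (e * (a * r))) = e * (a * α * a * r) := by
      rw [hα]; noncomm_ring
    rw [h1, ha]
  -- converse direction: members of rId (e*a*f) are of the form e*m with m ∈ rId a
  have key2 : ∀ a w : R, w ∈ rId (e * a * f) → ∃ m, m ∈ rId a ∧ e * m = w := by
    intro a w hw
    obtain ⟨s, hs⟩ := (mem_rId _ w).mp hw
    refine ⟨a * (f * s), (mem_rId _ _).mpr ⟨f * s, rfl⟩, ?_⟩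
    rw [← hs]; noncomm_ring
  have hdiff : e * z * f - e * y * f = e * (z - y) * f := by noncomm_ring
  constructor
  · -- sum condition
    rw [hdiff]
    ext w
    constructor
    · intro hw
      obtain ⟨w₁, hw₁, w₂, hw₂, hw12⟩ := Set.mem_add.mp hw
      obtain ⟨m₁, hm₁, he₁⟩ := key2 y w₁ hw₁
      obtain ⟨m₂, hm₂, he₂⟩ := key2 (z - y) w₂ hw₂
      have hm : m₁ + m₂ ∈ rId z := haddm z (hysub hm₁) (hwsub hm₂)
      obtain ⟨r, hr⟩ := (mem_rId z _).mp hm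
      have : w = e * (z * r) := by rw [hr, mul_add, he₁, he₂, hw12]
      rw [this]
      exact key z hz2 r
    · intro hw
      obtain ⟨s, hs⟩ := (mem_rId _ w).mp hw
      have h1 : z * (f * s) ∈ rId y + rId (z - y) := by
        rw [hsum]; exact (mem_rId _ _).mpr ⟨f * s, rfl⟩
      obtain ⟨u, hu, v, hv, huv⟩ := Set.mem_add.mp h1
      obtain ⟨a, ha⟩ := (mem_rId y u).mp hu
      obtain ⟨b, hb⟩ := (mem_rId (z - y) v).mp hv
      have h2 : w = e * (y * a) + e * ((z - y) * b) := by
        rw [ha, hb, ← mul_add, huv, ← hs]; noncomm_ring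
      rw [h2]
      exact Set.add_mem_add (key y hy a) (key (z - y) hwαw b)
  · -- intersection condition
    rw [hdiff]
    ext w
    simp only [Set.mem_inter_iff, Set.mem_singleton_iff]
    constructor
    · rintro ⟨hw1, hw2⟩
      obtain ⟨a, ha⟩ := (mem_rId _ w).mp hw1
      obtain ⟨b, hb⟩ := (mem_rId _ w).mp hw2
      have h1 : z * α * w = y * (f * a) := by
        have e1 : e * y * f * a = e * (y * (f * a)) := by noncomm_ring
        rw [← ha, e1, hze, hres _ (hysub ((mem_rId _ _).mpr ⟨f * a, rfl⟩))]
      have h2 : z * α * w = (z - y) * (f * b) := by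
        have e2 : e * (z - y) * f * b = e * ((z - y) * (f * b)) := by noncomm_ring
        rw [← hb, e2, hze, hres _ (hwsub ((mem_rId _ _).mpr ⟨f * b, rfl⟩))]
      have h3 : y * (f * a) = 0 := by
        refine hzero _ ((mem_rId _ _).mpr ⟨f * a, rfl⟩) ?_
        rw [← h1, h2]
        exact (mem_rId _ _).mpr ⟨f * b, rfl⟩
      have h4 : e * y * f * a = e * (y * (f * a)) := by noncomm_ring
      rw [← ha, h4, h3, mul_zero]
    · rintro rfl
      exact ⟨h0 _, h0 _⟩
end

section
/- Let R be a von Neumann regular ring with identity, let a, b, c ∈ R be fixed, and let e, f ∈ R be idempotents with eR = aR ∩ cR and Rf = Ra ∩ Rb. Let g be a von Neumann inverse of a (a*g*a = a), and let v, v' ∈ R both be strong von Neumann inverses of f*g*e. If e*v*f ≤⊕ e*v'*f, then e*v*f = e*v'*f. -/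
open Pointwise

theorem stmt13 {R : Type*} [Ring R]
    (hreg : ∀ r : R, ∃ x : R, r * x * r = r)
    (a b c e f : R) (he : e * e = e) (hf : f * f = f)
    (heR : rId e = rId a ∩ rId c) (hRf : lId f = lId a ∩ lId b)
    (g : R) (hg : a * g * a = a)
    (v v' : R)
    (hv1 : (f * g * e) * v * (f * g * e) = f * g * e) (hv2 : v * (f * g * e) * v = v)
    (hv'1 : (f * g * e) * v' * (f * g * e) = f * g * e) (hv'2 : v' * (f * g * e) * v' = v')
    (hle : dsLE (e * v * f) (e * v' * f)) :
    e * v * f = e * v' * f := by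
  set w : R := f * g * e with hw
  set x : R := e * v * f with hxdef
  set y : R := e * v' * f with hydef
  have he' : ∀ z : R, e * (e * z) = e * z := fun z => by rw [← mul_assoc, he]
  have hf' : ∀ z : R, f * (f * z) = f * z := fun z => by rw [← mul_assoc, hf]
  -- x and y are reflexive inverses of w
  have hxwx : x * w * x = x := by
    have h := congrArg (fun z => e * z * f) hv2
    simp only [hxdef, hydef, hw] at *
    simp only [mul_assoc] at h ⊢
    simp only [he', hf']
    exact h
  have hywy : y * w * y = y := by
    have h := congrArg (fun z => e * z * f) hv'2
    simp only [hxdef, hydef, hw] at *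
    simp only [mul_assoc] at h ⊢
    simp only [he', hf']
    exact h
  have hwxw : w * x * w = w := by
    have h := hv1
    simp only [hxdef, hydef, hw] at *
    simp only [mul_assoc] at h ⊢
    simp only [he', hf']
    exact h
  set d : R := y - x with hd
  -- key algebraic identity
  have key : x * w * d - d * (1 - w * x - w * d) = (y * w * y - y) - (x * w * x - x) := by
    rw [hd]; noncomm_ring
  rw [hywy, hxwx, sub_self, sub_self, sub_self, sub_eq_zero] at key
  -- x * w * d lies in the intersection, hence is 0
  have hA : x * w * d = 0 := by
    have mem1 : x * w * d ∈ rId x := ⟨w * d, by simp [rId, mul_assoc]⟩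
    have mem2 : x * w * d ∈ rId d := ⟨1 - w * x - w * d, key.symm⟩
    have : x * w * d ∈ rId x ∩ rId (y - x) := ⟨mem1, by rw [← hd]; exact mem2⟩
    rw [hle.2] at this
    simpa using this
  have hwd : w * d = 0 := by
    calc w * d = (w * x * w) * d := by rw [hwxw]
    _ = (w * x) * (w * d) := by rw [mul_assoc]
    _ = w * (x * w * d) := by rw [mul_assoc, ← mul_assoc x w d]
    _ = 0 := by rw [hA, mul_zero]
  have hwx : w * y = w * x := by
    have : w * y - w * x = 0 := by rw [← mul_sub, ← hd, hwd]
    exact sub_eq_zero.mp this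
  -- x ∈ yR from the sum condition
  have hxmem : x ∈ rId y := by
    rw [← hle.1]
    have h1 : x ∈ rId x := ⟨1, by simp [rId]⟩
    have h2 : (0 : R) ∈ rId (y - x) := ⟨0, by simp [rId]⟩
    simpa using Set.add_mem_add h1 h2
  obtain ⟨r, hr⟩ := hxmem
  simp only at hr
  have : y = x := by
    calc y = y * w * y := hywy.symm
    _ = y * (w * y) := by rw [mul_assoc]
    _ = y * (w * x) := by rw [hwx]
    _ = y * (w * (y * r)) := by rw [hr]
    _ = (y * w * y) * r := by simp only [mul_assoc]
    _ = y * r := by rw [hywy]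
    _ = x := hr
  exact this.symm
end

section
/- Let R = Mₙ(ℂ), let a ∈ R be positive semidefinite, let c ∈ R, let e ∈ R be an idempotent with eR = aR ∩ cR, and let f = eᴴ (the conjugate transpose of e). Then rank(e) = rank(a) if and only if a ∈ eSf, i.e. if and only if there exists a positive semidefinite s ∈ R with a = e*s*f. -/
open Matrix ComplexOrder

theorem stmt14 {n : ℕ} (a c e : Matrix (Fin n) (Fin n) ℂ)
    (ha : a.PosSemidef) (he : e * e = e)
    (heR : rId e = rId a ∩ rId c) :
    e.rank = a.rank ↔
      ∃ s : Matrix (Fin n) (Fin n) ℂ, s.PosSemidef ∧ a = e * s * eᴴ := by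
  obtain ⟨x, hx⟩ : e ∈ rId a := by
    have h1 : e ∈ rId e := ⟨e, he⟩
    rw [heR] at h1
    exact h1.1
  replace hx : a * x = e := hx
  constructor
  · intro hr
    have hle : LinearMap.range e.mulVecLin ≤ LinearMap.range a.mulVecLin := by
      rw [← hx, Matrix.mulVecLin_mul]
      exact LinearMap.range_comp_le_range _ _
    have heq : LinearMap.range e.mulVecLin = LinearMap.range a.mulVecLin :=
      Submodule.eq_of_le_of_finrank_le hle hr.ge
    have hea : e * a = a := by
      apply Matrix.toLin'.injective
      apply LinearMap.ext
      intro v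
      have hmem : a.mulVec v ∈ LinearMap.range e.mulVecLin := by
        rw [heq]; exact ⟨v, rfl⟩
      obtain ⟨w, hw⟩ := hmem
      simp only [Matrix.mulVecLin_apply] at hw
      rw [Matrix.toLin'_apply, Matrix.toLin'_apply, ← Matrix.mulVec_mulVec, ← hw,
        Matrix.mulVec_mulVec, he]
    have hae : a * eᴴ = a := by
      have := congrArg conjTranspose hea
      rwa [conjTranspose_mul, ha.1.eq] at this
    exact ⟨a, ha, by rw [mul_assoc, hae, hea]⟩
  · rintro ⟨s, hs, rfl⟩
    refine le_antisymm ?_ ?_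
    · have h2 := Matrix.rank_mul_le_left (e * s * eᴴ) x
      rwa [hx] at h2
    · exact (Matrix.rank_mul_le_left _ _).trans (Matrix.rank_mul_le_left _ _)
end

section
/- Let a and b be positive semidefinite n × n complex matrices. If a ≤⊕ b, then a ≤_L b, i.e. b − a is positive semidefinite. -/
open Pointwise Matrix ComplexOrder

/-!
Let `m ≥ 0` be an inner inverse of `b`, i.e. `b m b = b` (for a positive semidefinite matrix take
`m = b⁺`, obtained by inverting the nonzero eigenvalues). Since `a` and `c = b - a` lie in `bR`,
left multiplication by `b m` fixes them, so `a m c = c - c m c` lies in `aR ∩ cR = 0`. Taking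
adjoints, `c m a = 0` and `c m b = c`, hence `c = c m c = c* m c ≥ 0`.
-/

section Ring

variable {R : Type*} [Ring R] {a b m x : R}

lemma self_mem_rId (a : R) : a ∈ rId a := ⟨1, mul_one a⟩

lemma zero_mem_rId (a : R) : 0 ∈ rId a := ⟨0, mul_zero a⟩

lemma mul_mul_eq_of_mem_rId (hm : b * m * b = b) (hx : x ∈ rId b) : b * m * x = x := by
  obtain ⟨r, rfl⟩ := hx
  rw [← mul_assoc, hm]

namespace dsLE

lemma mem_rId_left (h : dsLE a b) : a ∈ rId b := by
  rw [← h.1]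
  simpa using Set.add_mem_add (self_mem_rId a) (zero_mem_rId (b - a))

lemma mem_rId_sub (h : dsLE a b) : b - a ∈ rId b := by
  rw [← h.1]
  simpa using Set.add_mem_add (zero_mem_rId a) (self_mem_rId (b - a))

lemma mul_mul_sub_eq_zero (h : dsLE a b) (hm : b * m * b = b) : a * m * (b - a) = 0 := by
  have hleft : a * m * (b - a) ∈ rId a := ⟨m * (b - a), (mul_assoc a m (b - a)).symm⟩
  have hright : a * m * (b - a) ∈ rId (b - a) := by
    refine ⟨1 - m * (b - a), ?_⟩
    calc (b - a) * (1 - m * (b - a)) = b * m * (b - a) - (b - a) * m * (b - a) := by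
          rw [mul_mul_eq_of_mem_rId hm h.mem_rId_sub]; noncomm_ring
      _ = a * m * (b - a) := by noncomm_ring
  simpa [h.2] using Set.mem_inter hleft hright

lemma sub_eq_star_mul_mul [StarRing R] (h : dsLE a b) (ha : IsSelfAdjoint a)
    (hb : IsSelfAdjoint b) (hm : IsSelfAdjoint m) (hbmb : b * m * b = b) :
    b - a = star (b - a) * m * (b - a) := by
  have hc : IsSelfAdjoint (b - a) := hb.sub ha
  have hcma : (b - a) * m * a = 0 := by
    simpa [mul_assoc, ha.star_eq, hc.star_eq, hm.star_eq]
      using congrArg star (h.mul_mul_sub_eq_zero hbmb)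
  have hcmb : (b - a) * m * b = b - a := by
    simpa [mul_assoc, hb.star_eq, hc.star_eq, hm.star_eq]
      using congrArg star (mul_mul_eq_of_mem_rId hbmb h.mem_rId_sub)
  calc b - a = (b - a) * m * b - (b - a) * m * a := by rw [hcmb, hcma, sub_zero]
    _ = star (b - a) * m * (b - a) := by rw [hc.star_eq]; noncomm_ring

lemma le [PartialOrder R] [StarRing R] [StarOrderedRing R] (h : dsLE a b) (ha : IsSelfAdjoint a)
    (hb : IsSelfAdjoint b) (hm : 0 ≤ m) (hbmb : b * m * b = b) : a ≤ b := by
  rw [← sub_nonneg, h.sub_eq_star_mul_mul ha hb (.of_nonneg hm) hbmb]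
  exact star_left_conjugate_nonneg hm _

end dsLE

end Ring

open scoped MatrixOrder

lemma Matrix.PosSemidef.exists_nonneg_mul_mul_eq_self {ι 𝕜 : Type*} [Fintype ι] [DecidableEq ι]
    [RCLike 𝕜] {b : Matrix ι ι 𝕜} (hb : b.PosSemidef) : ∃ m, 0 ≤ m ∧ b * m * b = b := by
  -- discharges the continuity side goals of `cfc_mul`, although `x⁻¹` is discontinuous at `0`
  have hinv : ContinuousOn (·⁻¹ : ℝ → ℝ) (spectrum ℝ b) := finite_real_spectrum.continuousOn _
  refine ⟨cfc (·⁻¹ : ℝ → ℝ) b,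
    cfc_nonneg fun x hx => inv_nonneg.mpr (spectrum_nonneg_of_nonneg hb.nonneg hx), ?_⟩
  calc b * cfc (·⁻¹ : ℝ → ℝ) b * b = cfc (fun x : ℝ => x * x⁻¹ * x) b := by
        rw [cfc_mul .., cfc_mul .., cfc_id' ℝ b]
    _ = b := by simp only [mul_inv_mul_cancel, cfc_id' ℝ b]

theorem stmt15 {n : ℕ} (a b : Matrix (Fin n) (Fin n) ℂ)
    (ha : a.PosSemidef) (hb : b.PosSemidef) (h : dsLE a b) :
    (b - a).PosSemidef := by
  obtain ⟨m, hm, hbmb⟩ := hb.exists_nonneg_mul_mul_eq_self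
  have hab : a ≤ b := h.le ha.isHermitian.isSelfAdjoint hb.isHermitian.isSelfAdjoint hm hbmb
  exact (sub_nonneg.mpr hab).posSemidef
end

section
/- Let R = Mₙ(ℂ), let a ∈ R be positive semidefinite, let c ∈ R, let e ∈ R be an idempotent with eR = aR ∩ cR, and let f = eᴴ. Let x ∈ R be an a-weighted Moore–Penrose inverse of f, i.e. f*x*f = f, x*f*x = x, (a*f*x)ᴴ = a*f*x and (a*x*f)ᴴ = a*x*f. Then a*x*f is positive semidefinite and a*x*f ≤⊕ a. -/
open Pointwise Matrix ComplexOrder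

theorem stmt17 {n : ℕ} (a c e : Matrix (Fin n) (Fin n) ℂ)
    (ha : a.PosSemidef) (he : e * e = e)
    (heR : rId e = rId a ∩ rId c)
    (f : Matrix (Fin n) (Fin n) ℂ) (hf : f = eᴴ)
    (x : Matrix (Fin n) (Fin n) ℂ)
    (hx1 : f * x * f = f) (hx2 : x * f * x = x)
    (hx3 : (a * f * x)ᴴ = a * f * x) (hx4 : (a * x * f)ᴴ = a * x * f) :
    (a * x * f).PosSemidef ∧ dsLE (a * x * f) a := by
  have haH : aᴴ = a := ha.1
  have hp : x * f * (x * f) = x * f := by rw [← mul_assoc, hx2]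
  have hkey : (x * f)ᴴ * a = a * (x * f) := by
    have h1 : (a * (x * f))ᴴ = a * (x * f) := by rw [← mul_assoc]; exact hx4
    calc (x * f)ᴴ * a = (x * f)ᴴ * aᴴ := by rw [haH]
      _ = (a * (x * f))ᴴ := (conjTranspose_mul _ _).symm
      _ = a * (x * f) := h1
  have hq : a * x * f = (x * f)ᴴ * a * (x * f) := by
    rw [hkey, mul_assoc a (x * f) (x * f), hp, ← mul_assoc]
  have hsum : rId (a * x * f) + rId (a - a * x * f) = rId a := by
    ext z
    simp only [rId, Set.mem_add, Set.mem_range]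
    constructor
    · rintro ⟨_, ⟨r, rfl⟩, _, ⟨s, rfl⟩, rfl⟩
      exact ⟨x * f * r + s - x * f * s, by noncomm_ring⟩
    · rintro ⟨r, rfl⟩
      exact ⟨_, ⟨r, rfl⟩, _, ⟨r, rfl⟩, by noncomm_ring⟩
  have hint : rId (a * x * f) ∩ rId (a - a * x * f) = {0} := by
    ext z
    simp only [rId, Set.mem_inter_iff, Set.mem_range, Set.mem_singleton_iff]
    constructor
    · rintro ⟨⟨r, hr⟩, ⟨s, hs⟩⟩
      have h1 : (x * f)ᴴ * z = z := by
        rw [← hr]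
        calc (x * f)ᴴ * (a * x * f * r) = ((x * f)ᴴ * a * (x * f)) * r := by
              noncomm_ring
          _ = a * x * f * r := by rw [← hq]
      have h2 : (x * f)ᴴ * z = 0 := by
        rw [← hs]
        calc (x * f)ᴴ * ((a - a * x * f) * s)
            = ((x * f)ᴴ * a - (x * f)ᴴ * a * (x * f)) * s := by noncomm_ring
          _ = 0 := by
              rw [hkey, mul_assoc a (x * f) (x * f), hp, sub_self, zero_mul]
      rw [← h1, h2]
    · rintro rfl
      exact ⟨⟨0, by simp⟩, ⟨0, by simp⟩⟩
  exact ⟨hq ▸ ha.conjTranspose_mul_mul_same _, hsum, hint⟩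
end
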